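/- Let j, j' ≥ 0 and k, k' ≥ −1 be integers. The Laurent monomials m_{j,k}(w) = (w₁/w₂)^j · w₂^k are square-integrable on H, and ∫_H m_{j,k}(w) · conj(m_{j',k'}(w)) dV(w) equals π²/((j+1)(k+2)) if (j,k) = (j',k'), and equals 0 if (j,k) ≠ (j',k'); that is, these monomials form an orthogonal family in L²(H) with the stated norms. -/

import Mathlib

/-!
Fubini over the fibres of `w ↦ w.2`: the fibre of the Hartogs triangle over `w₂` is the disc
`|w₁| < |w₂|`, and in polar coordinates `∫_{|z|<R} z^a conj z^b = δ_{ab} π R^(2a+2)/(a+1)`.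
Since `m_{j,k}(w) = w₁^j w₂^(k-j)`, the fibre integral of `m_{j,k} conj m_{j',k'}` is
`δ_{jj'} π/(j+1) · w₂^(k+1) conj w₂^(k'+1)`, and the same disc formula on `|w₂| < 1` contributes
`δ_{kk'} π/(k+2)`. Integrability comes from `|m_{j,k}| ≤ |w₂|^k` on the triangle: the fibre area
`π|w₂|²` makes `|w₂|^n` integrable for `n ≥ -2`.
-/

open MeasureTheory Complex

noncomputable section

def Hartogs : Set (ℂ × ℂ) := {w | ‖w.1‖ < ‖w.2‖ ∧ ‖w.2‖ < 1}

def laurentMonomial (j : ℕ) (k : ℤ) (w : ℂ × ℂ) : ℂ := (w.1 / w.2) ^ j * w.2 ^ k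

open Set Metric ComplexConjugate
open scoped ENNReal Real

theorem integral_exp_int_mul_I (n : ℤ) :
    ∫ θ in Ioo (-π) π, exp (n * θ * I) = (if n = 0 then 2 * π else 0 : ℂ) := by
  rw [← integral_Ioc_eq_integral_Ioo,
    ← intervalIntegral.integral_of_le (by linarith [Real.pi_pos])]
  split_ifs with hn
  · simp [hn]
    ring
  · have hc : (n * I : ℂ) ≠ 0 := by simpa using hn
    simp_rw [mul_right_comm _ _ I]
    rw [integral_exp_mul_complex hc, div_eq_zero_iff, sub_eq_zero]
    left
    rw [show (n * I * π : ℂ) = n * I * (-π : ℝ) + n * (2 * π * I) by push_cast; ring, exp_add,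
      exp_int_mul_two_pi_mul_I, mul_one]

theorem integral_ball_eq_integral_polarCoord {E : Type*} [NormedAddCommGroup E]
    [NormedSpace ℝ E] (f : ℂ → E) (R : ℝ) :
    ∫ z in ball (0 : ℂ) R, f z =
      ∫ p in Ioo 0 R ×ˢ Ioo (-π) π, p.1 • f (Complex.polarCoord.symm p) := by
  rw [← integral_indicator measurableSet_ball, ← Complex.integral_comp_polarCoord_symm,
    ← integral_indicator polarCoord.open_target.measurableSet,
    ← integral_indicator (measurableSet_Ioo.prod measurableSet_Ioo)]
  congr 1
  ext ⟨r, θ⟩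
  simp only [indicator_apply, polarCoord_target, mem_prod, mem_Ioi, mem_Ioo]
  by_cases hr : 0 < r <;> by_cases hR : r < R <;> simp [abs_of_pos, hr, hR]

theorem polarCoord_symm_pow_mul_conj_pow (a b : ℕ) (p : ℝ × ℝ) :
    p.1 • (Complex.polarCoord.symm p ^ a * conj (Complex.polarCoord.symm p) ^ b) =
      (p.1 : ℂ) ^ (a + b + 1) * exp (((a - b : ℤ) : ℂ) * p.2 * I) := by
  have h : Complex.polarCoord.symm p = p.1 * exp (p.2 * I) := by
    rw [Complex.polarCoord_symm_apply, exp_mul_I, ← ofReal_cos, ← ofReal_sin]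
  rw [h, map_mul, conj_ofReal, ← exp_conj, map_mul, conj_ofReal, conj_I, mul_pow, mul_pow,
    ← Complex.exp_nat_mul, ← Complex.exp_nat_mul, real_smul]
  have : exp (a * (p.2 * I)) * exp (b * (p.2 * -I)) = exp (((a - b : ℤ) : ℂ) * p.2 * I) := by
    rw [← exp_add]; push_cast; ring_nf
  linear_combination (p.1 : ℂ) ^ (a + b + 1) * this

theorem integral_Ioo_ofReal_pow (n : ℕ) {R : ℝ} (hR : 0 ≤ R) :
    ∫ r in Ioo 0 R, (r : ℂ) ^ n = R ^ (n + 1) / (n + 1) := by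
  rw [← integral_Ioc_eq_integral_Ioo, ← intervalIntegral.integral_of_le hR]
  simp_rw [← ofReal_pow]
  rw [intervalIntegral.integral_ofReal, integral_pow]
  push_cast
  ring

theorem integral_ball_pow_mul_conj_pow (a b : ℕ) {R : ℝ} (hR : 0 ≤ R) :
    ∫ z in ball (0 : ℂ) R, z ^ a * conj z ^ b =
      (if a = b then π * R ^ (2 * a + 2) / (a + 1) else 0 : ℂ) := by
  simp_rw [integral_ball_eq_integral_polarCoord, polarCoord_symm_pow_mul_conj_pow,
    Measure.volume_eq_prod]
  rw [setIntegral_prod_mul (fun r : ℝ ↦ (r : ℂ) ^ (a + b + 1))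
    (fun θ : ℝ ↦ exp (((a - b : ℤ) : ℂ) * θ * I)), integral_Ioo_ofReal_pow _ hR,
    integral_exp_int_mul_I]
  rcases eq_or_ne a b with rfl | hab
  · have ha : (a + 1 : ℂ) ≠ 0 := by norm_cast
    simp only [sub_self, if_true]
    rw [show a + a + 1 + 1 = 2 * a + 2 by ring,
      show ((a + a + 1 : ℕ) : ℂ) + 1 = 2 * (a + 1) by push_cast; ring]
    field_simp
  · simp [hab, sub_eq_zero]

theorem mem_hartogs_iff {w : ℂ × ℂ} :
    w ∈ Hartogs ↔ w.2 ∈ ball (0 : ℂ) 1 ∧ w.1 ∈ ball (0 : ℂ) ‖w.2‖ := by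
  simp only [Hartogs, mem_ofPred_eq, mem_ball_zero_iff, and_comm]

theorem isOpen_hartogs : IsOpen Hartogs :=
  (isOpen_lt continuous_fst.norm continuous_snd.norm).inter
    (isOpen_lt continuous_snd.norm continuous_const)

theorem indicator_hartogs_apply {M : Type*} [Zero M] (f : ℂ × ℂ → M) (u v : ℂ) :
    Hartogs.indicator f (u, v) =
      (ball (0 : ℂ) 1).indicator
        (fun v ↦ (ball (0 : ℂ) ‖v‖).indicator (fun u ↦ f (u, v)) u) v := by
  by_cases hv : v ∈ ball (0 : ℂ) 1 <;> by_cases hu : u ∈ ball (0 : ℂ) ‖v‖ <;>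
    simp [hv, hu, mem_hartogs_iff]

theorem setLIntegral_hartogs {f : ℂ × ℂ → ℝ≥0∞} (hf : Measurable f) :
    ∫⁻ w in Hartogs, f w = ∫⁻ v in ball (0 : ℂ) 1, ∫⁻ u in ball (0 : ℂ) ‖v‖, f (u, v) := by
  rw [← lintegral_indicator isOpen_hartogs.measurableSet, Measure.volume_eq_prod,
    lintegral_prod_symm' _ (hf.indicator isOpen_hartogs.measurableSet),
    ← lintegral_indicator measurableSet_ball]
  congr 1
  ext v
  by_cases hv : v ∈ ball (0 : ℂ) 1 <;>
    simp [indicator_hartogs_apply, hv, lintegral_indicator measurableSet_ball]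

theorem setIntegral_hartogs {E : Type*} [NormedAddCommGroup E] [NormedSpace ℝ E]
    {f : ℂ × ℂ → E} (hf : IntegrableOn f Hartogs) :
    ∫ w in Hartogs, f w = ∫ v in ball (0 : ℂ) 1, ∫ u in ball (0 : ℂ) ‖v‖, f (u, v) := by
  rw [← integral_indicator isOpen_hartogs.measurableSet, Measure.volume_eq_prod,
    integral_prod_symm _ ((integrable_indicator_iff isOpen_hartogs.measurableSet).2 hf),
    ← integral_indicator measurableSet_ball]
  congr 1
  ext v
  by_cases hv : v ∈ ball (0 : ℂ) 1 <;>
    simp [indicator_hartogs_apply, hv, integral_indicator measurableSet_ball]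

theorem zpow_mul_sq_le_one {t : ℝ} (ht₀ : 0 ≤ t) (ht₁ : t ≤ 1) {n : ℤ} (hn : -2 ≤ n) :
    t ^ n * t ^ 2 ≤ 1 := by
  rcases ht₀.eq_or_lt with rfl | ht
  · simp
  · rw [← zpow_natCast, ← zpow_add₀ ht.ne']
    exact zpow_le_one₀ ht ht₁ (by omega)

theorem setLIntegral_hartogs_norm_snd_zpow_lt_top {n : ℤ} (hn : -2 ≤ n) :
    ∫⁻ w in Hartogs, ENNReal.ofReal (‖w.2‖ ^ n) < ∞ := by
  rw [setLIntegral_hartogs (by fun_prop)]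
  simp_rw [setLIntegral_const, Complex.volume_ball]
  calc ∫⁻ v in ball (0 : ℂ) 1, ENNReal.ofReal (‖v‖ ^ n) * (ENNReal.ofReal ‖v‖ ^ 2 * NNReal.pi)
      ≤ ∫⁻ v in ball (0 : ℂ) 1, (NNReal.pi : ℝ≥0∞) := by
        refine setLIntegral_mono measurable_const fun v hv ↦ ?_
        rw [← mul_assoc, ← ENNReal.ofReal_pow (norm_nonneg v),
          ← ENNReal.ofReal_mul (by positivity)]
        refine mul_le_of_le_one_left zero_le (ENNReal.ofReal_le_one.2 ?_)
        exact zpow_mul_sq_le_one (norm_nonneg v) (mem_ball_zero_iff.1 hv).le hn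
    _ < ∞ := by
        rw [setLIntegral_const, Complex.volume_ball]
        exact ENNReal.mul_lt_top ENNReal.coe_lt_top (by simp)

theorem integrableOn_hartogs_norm_snd_zpow {n : ℤ} (hn : -2 ≤ n) :
    IntegrableOn (fun w : ℂ × ℂ ↦ ‖w.2‖ ^ n) Hartogs :=
  ⟨(measurable_snd.norm.pow_const n).aestronglyMeasurable,
    (hasFiniteIntegral_iff_ofReal (ae_of_all _ fun w ↦ by positivity)).2
      (setLIntegral_hartogs_norm_snd_zpow_lt_top hn)⟩

theorem measurable_laurentMonomial (j : ℕ) (k : ℤ) : Measurable (laurentMonomial j k) :=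
  ((measurable_fst.div measurable_snd).pow_const j).mul (measurable_snd.pow_const k)

theorem norm_laurentMonomial_le (j : ℕ) (k : ℤ) {w : ℂ × ℂ} (hw : w ∈ Hartogs) :
    ‖laurentMonomial j k w‖ ≤ ‖w.2‖ ^ k := by
  have hquot : ‖w.1 / w.2‖ ≤ 1 := by
    rw [norm_div]
    exact div_le_one_of_le₀ hw.1.le (norm_nonneg _)
  rw [laurentMonomial, norm_mul, norm_pow, norm_zpow]
  exact mul_le_of_le_one_left (by positivity) (pow_le_one₀ (norm_nonneg _) hquot)

theorem setLIntegral_hartogs_norm_laurentMonomial_sq_lt_top (j : ℕ) {k : ℤ} (hk : -1 ≤ k) :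
    ∫⁻ w in Hartogs, ENNReal.ofReal (‖laurentMonomial j k w‖ ^ 2) < ∞ := by
  refine lt_of_le_of_lt (setLIntegral_mono (by fun_prop) fun w hw ↦ ?_)
    (setLIntegral_hartogs_norm_snd_zpow_lt_top (n := 2 * k) (by omega))
  rw [zpow_mul', zpow_ofNat]
  exact ENNReal.ofReal_le_ofReal
    (pow_le_pow_left₀ (norm_nonneg _) (norm_laurentMonomial_le j k hw) 2)

theorem integrableOn_laurentMonomial_mul_conj (j j' : ℕ) {k k' : ℤ} (hk : -1 ≤ k)
    (hk' : -1 ≤ k') :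
    IntegrableOn (fun w ↦ laurentMonomial j k w * conj (laurentMonomial j' k' w)) Hartogs := by
  refine (integrableOn_hartogs_norm_snd_zpow (n := k + k') (by omega)).mono'
    ((measurable_laurentMonomial j k).mul
      (continuous_conj.measurable.comp (measurable_laurentMonomial j' k'))).aestronglyMeasurable
    (ae_restrict_of_forall_mem isOpen_hartogs.measurableSet fun w hw ↦ ?_)
  have hw₂ : ‖w.2‖ ≠ 0 := ((norm_nonneg _).trans_lt hw.1).ne'
  rw [norm_mul, RCLike.norm_conj, zpow_add₀ hw₂]
  exact mul_le_mul (norm_laurentMonomial_le j k hw) (norm_laurentMonomial_le j' k' hw)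
    (norm_nonneg _) (by positivity)

theorem laurentMonomial_mul_conj (j j' : ℕ) (k k' : ℤ) (u v : ℂ) :
    laurentMonomial j k (u, v) * conj (laurentMonomial j' k' (u, v)) =
      v ^ k * conj v ^ k' / (v ^ j * conj v ^ j') * (u ^ j * conj u ^ j') := by
  simp only [laurentMonomial, map_mul, map_pow, map_zpow₀, map_div₀]
  ring

theorem integral_ball_laurentMonomial_mul_conj (j j' : ℕ) (k k' : ℤ) {v : ℂ} (hv : v ≠ 0) :
    ∫ u in ball (0 : ℂ) ‖v‖, laurentMonomial j k (u, v) * conj (laurentMonomial j' k' (u, v)) =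
      if j = j' then π / (j + 1) * (v ^ (k + 1) * conj v ^ (k' + 1)) else 0 := by
  simp_rw [laurentMonomial_mul_conj]
  rw [integral_const_mul, integral_ball_pow_mul_conj_pow j j' (norm_nonneg v)]
  rcases eq_or_ne j j' with rfl | hj
  · have hv' : conj v ≠ 0 := (map_ne_zero _).2 hv
    have hj : (j + 1 : ℂ) ≠ 0 := by norm_cast
    rw [if_pos rfl, if_pos rfl, pow_add, pow_mul, ← mul_conj', zpow_add_one₀ hv,
      zpow_add_one₀ hv']
    field_simp
    ring
  · simp [hj]

theorem integral_ball_zpow_mul_conj_zpow {a b : ℤ} (ha : 0 ≤ a) (hb : 0 ≤ b) {R : ℝ}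
    (hR : 0 ≤ R) :
    ∫ z in ball (0 : ℂ) R, z ^ a * conj z ^ b =
      (if a = b then π * (R : ℂ) ^ (2 * a + 2) / (a + 1) else 0 : ℂ) := by
  lift a to ℕ using ha
  lift b to ℕ using hb
  simp only [zpow_natCast, Nat.cast_inj, Int.cast_natCast]
  exact_mod_cast integral_ball_pow_mul_conj_pow a b hR

theorem laurent_monomials_orthogonal (j j' : ℕ) (k k' : ℤ)
    (hk : -1 ≤ k) (hk' : -1 ≤ k') :
    (∫⁻ w in Hartogs, ENNReal.ofReal (‖laurentMonomial j k w‖ ^ 2)) < ⊤ ∧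
    (∫ w in Hartogs, laurentMonomial j k w * (starRingEnd ℂ) (laurentMonomial j' k' w))
      = if j = j' ∧ k = k' then
          (Real.pi ^ 2 : ℂ) / (((j : ℂ) + 1) * ((k : ℂ) + 2))
        else 0 := by
  refine ⟨setLIntegral_hartogs_norm_laurentMonomial_sq_lt_top j hk, ?_⟩
  rw [setIntegral_hartogs (integrableOn_laurentMonomial_mul_conj j j' hk hk'),
    setIntegral_congr_ae measurableSet_ball ((Measure.ae_ne volume 0).mono fun v hv _ ↦
      integral_ball_laurentMonomial_mul_conj j j' k k' hv)]
  rcases eq_or_ne j j' with rfl | hj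
  · simp only [if_true, true_and]
    rw [integral_const_mul, integral_ball_zpow_mul_conj_zpow (by omega) (by omega) zero_le_one]
    have hj : (j + 1 : ℂ) ≠ 0 := by norm_cast
    have hk₂ : (k + 2 : ℂ) ≠ 0 := by norm_cast; omega
    simp only [add_left_inj, ofReal_one, one_zpow]
    split_ifs
    · push_cast
      rw [add_assoc, one_add_one_eq_two]
      field_simp
    · rw [mul_zero]
  · simp [hj]
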